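/- For differentiable curves A : ℝ → M₂(ℝ) with det A(x) = 1 for all x, define the affine transformation T_A on curves a : ℝ → ℝ³ by (T_A a)(x) = B(A)(x)·a(x) + θ(A)(x), where B(A) and θ(A) are the representation matrix and cocycle built from the entries of A. Then for any two such curves A₁, A₂ and any curve a : ℝ → ℝ³, T_{A₁}(T_{A₂}(a)) = T_{A₁·A₂}(a). -/

import Mathlib

open Matrix

/-- The map `B` sends a 2×2 matrix `A = [[α, β], [γ, δ]]` to the 3×3 matrix
with rows `(δ², -δγ, γ²)`, `(-2βδ, αδ + βγ, -2αγ)`, `(β², -αβ, α²)`. -/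
def riccatiRep (A : Matrix (Fin 2) (Fin 2) ℝ) : Matrix (Fin 3) (Fin 3) ℝ :=
  !![(A 1 1) ^ 2, -(A 1 1) * (A 1 0), (A 1 0) ^ 2;
     -2 * (A 0 1) * (A 1 1), (A 0 0) * (A 1 1) + (A 0 1) * (A 1 0),
       -2 * (A 0 0) * (A 1 0);
     (A 0 1) ^ 2, -(A 0 0) * (A 0 1), (A 0 0) ^ 2]

/-- For a curve `A(x) = [[α(x), β(x)], [γ(x), δ(x)]]` of 2×2 matrices, the
cocycle `θ(A)(x) = (γδ' - δγ', δα' - αδ' + βγ' - γβ', αβ' - βα')(x)`. -/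
noncomputable def riccatiCocycle (A : ℝ → Matrix (Fin 2) (Fin 2) ℝ) (x : ℝ) :
    Fin 3 → ℝ :=
  ![A x 1 0 * deriv (fun t => A t 1 1) x - A x 1 1 * deriv (fun t => A t 1 0) x,
    A x 1 1 * deriv (fun t => A t 0 0) x - A x 0 0 * deriv (fun t => A t 1 1) x
      + A x 0 1 * deriv (fun t => A t 1 0) x - A x 1 0 * deriv (fun t => A t 0 1) x,
    A x 0 0 * deriv (fun t => A t 0 1) x - A x 0 1 * deriv (fun t => A t 0 0) x]

/-- The affine transformation `T_A` acting on curves `a : ℝ → ℝ³`: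
`(T_A a)(x) = B(A(x))·a(x) + θ(A)(x)`. -/
noncomputable def riccatiAction (A : ℝ → Matrix (Fin 2) (Fin 2) ℝ)
    (a : ℝ → Fin 3 → ℝ) (x : ℝ) : Fin 3 → ℝ :=
  (riccatiRep (A x)).mulVec (a x) + riccatiCocycle A x

/-!
`B` is multiplicative, `B(A₁A₂) = B(A₁)B(A₂)`, a polynomial identity in the entries.
By the product rule `θ` is a twisted cocycle, `θ(A₁A₂) = B(A₁)θ(A₂) + det(A₂)·θ(A₁)`.
When `det A₂ = 1` these two identities are exactly what makes the affine maps
`a ↦ B(A)a + θ(A)` compose: `T_{A₁}T_{A₂}a = B(A₁A₂)a + B(A₁)θ(A₂) + θ(A₁)`.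
-/

theorem riccatiRep_mul (A B : Matrix (Fin 2) (Fin 2) ℝ) :
    riccatiRep (A * B) = riccatiRep A * riccatiRep B := by
  ext i j
  fin_cases i <;> fin_cases j <;>
    simp [riccatiRep, mul_apply, Fin.sum_univ_two, Fin.sum_univ_three] <;> ring

theorem deriv_matrix_mul_apply {n : Type*} [Fintype n] {A B : ℝ → Matrix n n ℝ} {x : ℝ}
    (hA : ∀ i j, DifferentiableAt ℝ (fun t => A t i j) x)
    (hB : ∀ i j, DifferentiableAt ℝ (fun t => B t i j) x) (i j : n) :
    deriv (fun t => (A t * B t) i j) x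
      = ∑ k, (deriv (fun t => A t i k) x * B x k j + A x i k * deriv (fun t => B t k j) x) := by
  simp only [mul_apply]
  rw [deriv_fun_sum fun k _ => (hA i k).fun_mul (hB k j)]
  exact Finset.sum_congr rfl fun k _ => deriv_fun_mul (hA i k) (hB k j)

theorem riccatiCocycle_mul {A B : ℝ → Matrix (Fin 2) (Fin 2) ℝ} {x : ℝ}
    (hA : ∀ i j, DifferentiableAt ℝ (fun t => A t i j) x)
    (hB : ∀ i j, DifferentiableAt ℝ (fun t => B t i j) x) :
    riccatiCocycle (fun t => A t * B t) x
      = riccatiRep (A x) *ᵥ riccatiCocycle B x + (B x).det • riccatiCocycle A x := by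
  have hAB := deriv_matrix_mul_apply hA hB
  ext i
  simp only [riccatiCocycle, hAB, Fin.sum_univ_two]
  fin_cases i <;>
    simp [riccatiRep, mul_apply, Fin.sum_univ_two, det_fin_two] <;> ring

theorem riccatiAction_mul_general (A₁ A₂ : ℝ → Matrix (Fin 2) (Fin 2) ℝ)
    (hd₁ : ∀ (i j : Fin 2) (x : ℝ), DifferentiableAt ℝ (fun t => A₁ t i j) x)
    (hd₂ : ∀ (i j : Fin 2) (x : ℝ), DifferentiableAt ℝ (fun t => A₂ t i j) x)
    (hdet₂ : ∀ x : ℝ, (A₂ x).det = 1)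
    (a : ℝ → Fin 3 → ℝ) :
    riccatiAction A₁ (riccatiAction A₂ a)
      = riccatiAction (fun t => A₁ t * A₂ t) a := by
  funext x
  rw [riccatiAction, riccatiAction, riccatiAction, riccatiCocycle_mul (hd₁ · · x) (hd₂ · · x),
    hdet₂, one_smul, riccatiRep_mul, ← mulVec_mulVec, mulVec_add, add_assoc]

/-- **The formulas define an affine action:** for differentiable
SL(2,ℝ)-valued curves `A₁`, `A₂` and any curve `a : ℝ → ℝ³`,
`T_{A₁}(T_{A₂}(a)) = T_{A₁·A₂}(a)` (pointwise matrix product). -/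
theorem riccatiAction_mul (A₁ A₂ : ℝ → Matrix (Fin 2) (Fin 2) ℝ)
    (hd₁ : ∀ (i j : Fin 2) (x : ℝ), DifferentiableAt ℝ (fun t => A₁ t i j) x)
    (hd₂ : ∀ (i j : Fin 2) (x : ℝ), DifferentiableAt ℝ (fun t => A₂ t i j) x)
    (hdet₁ : ∀ x : ℝ, (A₁ x).det = 1) (hdet₂ : ∀ x : ℝ, (A₂ x).det = 1)
    (a : ℝ → Fin 3 → ℝ) :
    riccatiAction A₁ (riccatiAction A₂ a)
      = riccatiAction (fun t => A₁ t * A₂ t) a :=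
  riccatiAction_mul_general A₁ A₂ hd₁ hd₂ hdet₂ a
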